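/- arXiv:2502.20783 — 2 statements merged into one kernel-verified Lean document; each statement's English description precedes it below -/
import Mathlib

section
/- Let g be continuously differentiable, strictly convex, strictly log-concave, with g(0)=g'(0)=0 and g'(w)→∞. For fixed α > 0 and C ≥ 1, consider ν at which the intermediary's utility αC - ν·g(α + max_{w≥0}(w - ν g(w))) is maximized over ν > 0 (assuming the sufficient condition lim_{w→∞} g(w - g(w)/g'(w))/g'(w) = ∞). Then the maximum utility equals α(C - 1), and at the maximizing ν the quality α + max_{w≥0}(w - ν g(w)) equals the consumer's own optimal quality argmax_{w≥0}(w - ν g(w)). -/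
/-!
Since `V(ν) = w*(ν) - ν g(w*(ν)) ≥ 0` and `w*(ν)` beats the quality `α + V(ν)`, we get
`ν g(α + V(ν)) ≥ α`, so the utility never exceeds `α(C - 1)`. Equality holds when
`ν g(w*(ν)) = α`, for then `α + V(ν) = w*(ν)`. To find such a `ν`, note that by convexity every
`w > 0` is the consumer's optimum at `ν = 1 / g'(w)`, so it suffices to solve `g(w) / g'(w) = α`;
this ratio is below `w` and tends to infinity, and the intermediate value theorem applies.
-/

open Filter Set

section Tangent

variable {S : Set ℝ} {g : ℝ → ℝ} {w x : ℝ}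

lemma ConvexOn.add_deriv_mul_sub_le (hgc : ConvexOn ℝ S g) (hw : w ∈ S) (hx : x ∈ S)
    (hd : DifferentiableAt ℝ g w) : g w + deriv g w * (x - w) ≤ g x := by
  rcases lt_trichotomy x w with hxw | rfl | hwx
  · have hslope := hgc.slope_le_deriv hx hw hxw hd
    rw [slope_def_field, div_le_iff₀ (sub_pos.2 hxw)] at hslope
    linarith
  · simp
  · have hslope := hgc.deriv_le_slope hw hx hwx hd
    rw [slope_def_field, le_div_iff₀ (sub_pos.2 hwx)] at hslope
    linarith

lemma ConvexOn.isMaxOn_sub_inv_deriv_mul (hgc : ConvexOn ℝ S g) (hw : w ∈ S)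
    (hd : DifferentiableAt ℝ g w) (hpos : 0 < deriv g w) :
    IsMaxOn (fun x => x - (deriv g w)⁻¹ * g x) S w := by
  intro x hx
  have htangent := hgc.add_deriv_mul_sub_le hw hx hd
  have hgain : x - w ≤ (deriv g w)⁻¹ * (g x - g w) := by
    rw [le_inv_mul_iff₀ hpos]
    linarith
  show x - (deriv g w)⁻¹ * g x ≤ w - (deriv g w)⁻¹ * g w
  linarith [mul_sub (deriv g w)⁻¹ (g x) (g w)]

end Tangent

namespace StrictConvexOn

variable {g : ℝ → ℝ} {w : ℝ}

section FlatAtZero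

variable (hsc : StrictConvexOn ℝ (Ici 0) g) (hd : Differentiable ℝ g)
  (h0 : g 0 = 0) (h0' : deriv g 0 = 0)
include hsc hd h0

lemma lt_mul_deriv (hw : 0 < w) : g w < w * deriv g w := by
  have hslope := hsc.slope_lt_deriv self_mem_Ici hw.le hw (hd w)
  rw [slope_def_field, h0, sub_zero, sub_zero, div_lt_iff₀ hw] at hslope
  linarith

include h0'

lemma pos_of_deriv_zero (hw : 0 < w) : 0 < g w := by
  have hslope := hsc.deriv_lt_slope self_mem_Ici hw.le hw (hd 0)
  rw [slope_def_field, h0, h0', sub_zero, sub_zero] at hslope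
  exact (div_pos_iff_of_pos_right hw).1 hslope

lemma deriv_pos (hw : 0 < w) : 0 < deriv g w := by
  have := hsc.lt_mul_deriv hd h0 hw
  have := hsc.pos_of_deriv_zero hd h0 h0' hw
  exact pos_of_mul_pos_right (by linarith) hw.le

lemma deriv_nonneg (hw : 0 ≤ w) : 0 ≤ deriv g w := by
  rcases hw.eq_or_lt with rfl | hw
  · exact h0'.ge
  · exact (hsc.deriv_pos hd h0 h0' hw).le

lemma monotoneOn : MonotoneOn g (Ici 0) := by
  intro u hu v hv huv
  have htangent := hsc.convexOn.add_deriv_mul_sub_le hu hv (hd u)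
  linarith [mul_nonneg (hsc.deriv_nonneg hd h0 h0' hu) (sub_nonneg.2 huv)]

lemma div_deriv_lt (hw : 0 < w) : g w / deriv g w < w := by
  rw [div_lt_iff₀ (hsc.deriv_pos hd h0 h0' hw)]
  exact hsc.lt_mul_deriv hd h0 hw

lemma tendsto_div_deriv_atTop
    (hsuff : Tendsto (fun w => g (w - g w / deriv g w) / deriv g w) atTop atTop) :
    Tendsto (fun w => g w / deriv g w) atTop atTop := by
  refine tendsto_atTop_mono' atTop ?_ hsuff
  filter_upwards [eventually_gt_atTop 0] with w hw
  have hratio_nonneg : 0 ≤ g w / deriv g w :=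
    div_nonneg (hsc.pos_of_deriv_zero hd h0 h0' hw).le (hsc.deriv_pos hd h0 h0' hw).le
  have hratio_lt := hsc.div_deriv_lt hd h0 h0' hw
  gcongr
  · exact hsc.deriv_nonneg hd h0 h0' hw.le
  · exact hsc.monotoneOn hd h0 h0' (by simp only [mem_Ici]; linarith) hw.le (by linarith)

lemma exists_div_deriv_eq (hcont : Continuous (deriv g))
    (hsuff : Tendsto (fun w => g (w - g w / deriv g w) / deriv g w) atTop atTop)
    {α : ℝ} (hα : 0 < α) : ∃ w, 0 < w ∧ g w / deriv g w = α := by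
  obtain ⟨b, hb, hαb⟩ := ((hsc.tendsto_div_deriv_atTop hd h0 h0' hsuff).eventually_ge_atTop α
    |>.and (eventually_ge_atTop α)).exists
  have hcont_on : ContinuousOn (fun w => g w / deriv g w) (Icc α b) :=
    hd.continuous.continuousOn.div hcont.continuousOn fun x hx =>
      (hsc.deriv_pos hd h0 h0' (hα.trans_le hx.1)).ne'
  obtain ⟨w, hw, hw_eq⟩ := intermediate_value_Icc hαb hcont_on
    ⟨(hsc.div_deriv_lt hd h0 h0' hα).le, hb⟩
  exact ⟨w, hα.trans_le hw.1, hw_eq⟩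

end FlatAtZero

end StrictConvexOn

lemma le_mul_apply_add_of_isMaxOn {g : ℝ → ℝ} (h0 : g 0 = 0) {ν w α : ℝ} (hα : 0 ≤ α)
    (hw : IsMaxOn (fun x => x - ν * g x) (Ici 0) w) :
    α ≤ ν * g (α + (w - ν * g w)) := by
  have hvalue_nonneg : 0 ≤ w - ν * g w := by
    simpa [h0] using hw (self_mem_Ici : (0 : ℝ) ∈ Ici 0)
  have := isMaxOn_iff.1 hw _ (show α + (w - ν * g w) ∈ Ici 0 from add_nonneg hα hvalue_nonneg)
  linarith

theorem stmt15_general (g : ℝ → ℝ) (hg : ContDiff ℝ 1 g)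
    (hsc : StrictConvexOn ℝ (Set.Ici (0 : ℝ)) g)
    (h0 : g 0 = 0) (h0' : deriv g 0 = 0)
    (hsuff : Tendsto (fun w => g (w - g w / deriv g w) / deriv g w) atTop atTop)
    (α C : ℝ) (hα : 0 < α)
    (wstar : ℝ → ℝ)
    (hmax : ∀ ν : ℝ, 0 < ν → 0 ≤ wstar ν ∧
      IsMaxOn (fun x => x - ν * g x) (Set.Ici 0) (wstar ν))
    (huniq : ∀ ν : ℝ, 0 < ν → ∀ w : ℝ, 0 ≤ w →
      IsMaxOn (fun x => x - ν * g x) (Set.Ici 0) w → w = wstar ν)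
    (U : ℝ → ℝ)
    (hU : ∀ ν : ℝ, 0 < ν →
      U ν = α * C - ν * g (α + (wstar ν - ν * g (wstar ν)))) :
    ∃ ν₀ : ℝ, 0 < ν₀ ∧ (∀ ν : ℝ, 0 < ν → U ν ≤ U ν₀) ∧
      U ν₀ = α * (C - 1) ∧
      α + (wstar ν₀ - ν₀ * g (wstar ν₀)) = wstar ν₀ := by
  have hd : Differentiable ℝ g := hg.differentiable one_ne_zero
  obtain ⟨w₀, hw₀, hratio⟩ :=
    hsc.exists_div_deriv_eq hd h0 h0' (hg.continuous_deriv le_rfl) hsuff hα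
  have hderiv := hsc.deriv_pos hd h0 h0' hw₀
  set ν₀ := (deriv g w₀)⁻¹
  have hν₀ : 0 < ν₀ := inv_pos.2 hderiv
  have hwstar : wstar ν₀ = w₀ :=
    (huniq ν₀ hν₀ w₀ hw₀.le (hsc.convexOn.isMaxOn_sub_inv_deriv_mul hw₀.le (hd w₀) hderiv)).symm
  have hcost : ν₀ * g w₀ = α := by rw [inv_mul_eq_div, hratio]
  have hquality : α + (wstar ν₀ - ν₀ * g (wstar ν₀)) = wstar ν₀ := by
    rw [hwstar, hcost, add_sub_cancel]
  have hUν₀ : U ν₀ = α * (C - 1) := by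
    rw [hU ν₀ hν₀, hquality, hwstar, hcost]; ring
  refine ⟨ν₀, hν₀, fun ν hν => ?_, hUν₀, hquality⟩
  have := le_mul_apply_add_of_isMaxOn h0 hα.le (hmax ν hν).2
  rw [hU ν hν, hUν₀]
  linarith

/-- The intermediary's utility `U(ν) = αC - ν·g(α + max_{w≥0}(w - ν g(w)))` attains
its maximum over `ν > 0`, the maximal utility equals `α(C - 1)`, and at the
maximizing `ν` the quality `α + max_{w≥0}(w - ν g(w))` equals the consumer's own
optimal quality `w*(ν)`. -/
theorem stmt15 (g : ℝ → ℝ) (hg : ContDiff ℝ 1 g)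
    (hsc : StrictConvexOn ℝ (Set.Ici (0 : ℝ)) g)
    (h0 : g 0 = 0) (h0' : deriv g 0 = 0)
    (hg'inf : Tendsto (deriv g) atTop atTop)
    (hlog : StrictMonoOn (fun w => g w / deriv g w) (Set.Ioi 0))
    (hsuff : Tendsto (fun w => g (w - g w / deriv g w) / deriv g w) atTop atTop)
    (α C : ℝ) (hα : 0 < α) (hC : 1 ≤ C)
    (wstar : ℝ → ℝ)
    (hmax : ∀ ν : ℝ, 0 < ν → 0 ≤ wstar ν ∧
      IsMaxOn (fun x => x - ν * g x) (Set.Ici 0) (wstar ν))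
    (huniq : ∀ ν : ℝ, 0 < ν → ∀ w : ℝ, 0 ≤ w →
      IsMaxOn (fun x => x - ν * g x) (Set.Ici 0) w → w = wstar ν)
    (U : ℝ → ℝ)
    (hU : ∀ ν : ℝ, 0 < ν →
      U ν = α * C - ν * g (α + (wstar ν - ν * g (wstar ν)))) :
    ∃ ν₀ : ℝ, 0 < ν₀ ∧ (∀ ν : ℝ, 0 < ν → U ν ≤ U ν₀) ∧
      U ν₀ = α * (C - 1) ∧
      α + (wstar ν₀ - ν₀ * g (wstar ν₀)) = wstar ν₀ :=
  stmt15_general g hg hsc h0 h0' hsuff α C hα wstar hmax huniq U hU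
end

section
/- Let g be continuously differentiable, strictly convex, strictly log-concave, with g(0)=g'(0)=0 and g'(w)→∞. Fix C > 1, α > 0, and ν in the intermediation regime. Then the derivative with respect to ν of the equilibrium social welfare W(ν) = Cα - ν·g(α + V(ν)) + C·V(ν), where V(ν) = max_{w≥0}(w - ν g(w)), is strictly negative; that is, g(α + V(ν)) + C·g(w*(ν)) > g'(α + V(ν)) · g(w*(ν))/g'(w*(ν)), where w*(ν) is the maximizer of w - ν g(w). -/
open Filter Topology Set

/-!
The first-order condition `ν g'(w*(ν)) = 1` and strict monotonicity of `g'` make `w*` continuous,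
so the envelope theorem gives `V'(ν) = -g(w*(ν))`. Differentiating `W` and substituting
`ν = 1 / g'(w*(ν))` turns `W'(ν) < 0` into the second claim. For `a = α + V(ν)` and `b = w*(ν)`,
`g'(a) g(b) / g'(b)` is at most `g(b)` when `a ≤ b` (monotonicity of `g'`) and at most `g(a)` when
`b < a` (monotonicity of `g / g'`), and both are smaller than `g(a) + C g(b)`.
-/

theorem StrictMonoOn.tendsto_of_tendsto_comp {α β γ : Type*} [LinearOrder α] [TopologicalSpace α]
    [OrderTopology α] [DenselyOrdered α] [LinearOrder β] [TopologicalSpace β] [OrderTopology β]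
    {φ : α → β} {s : Set α} (hφ : StrictMonoOn φ s) {b : α} (hs : s ∈ 𝓝 b) {w : γ → α}
    {l : Filter γ} (hws : ∀ᶠ x in l, w x ∈ s) (hlim : Tendsto (φ ∘ w) l (𝓝 (φ b))) :
    Tendsto w l (𝓝 b) := by
  have hbs : b ∈ s := mem_of_mem_nhds hs
  rw [tendsto_order]
  constructor
  · intro a hab
    obtain ⟨l', hl'b, hl's⟩ := exists_Ioc_subset_of_mem_nhds hs ⟨a, hab⟩
    obtain ⟨c, hac, hcb⟩ := exists_between (max_lt hab hl'b)
    have hcs : c ∈ s := hl's ⟨(le_max_right _ _).trans_lt hac, hcb.le⟩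
    filter_upwards [hws, (tendsto_order.1 hlim).1 _ (hφ hcs hbs hcb)] with x hxs hx
    by_contra! hxa
    exact (hφ.monotoneOn hxs hcs (hxa.trans ((le_max_left _ _).trans hac.le))).not_gt hx
  · intro a hba
    obtain ⟨u, hbu, hus⟩ := exists_Ico_subset_of_mem_nhds hs ⟨a, hba⟩
    obtain ⟨c, hbc, hca⟩ := exists_between (lt_min hba hbu)
    have hcs : c ∈ s := hus ⟨hbc.le, hca.trans_le (min_le_right _ _)⟩
    filter_upwards [hws, (tendsto_order.1 hlim).2 _ (hφ hbs hcs hbc)] with x hxs hx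
    by_contra! hax
    exact (hφ.monotoneOn hcs hxs ((hca.trans_le (min_le_left _ _)).le.trans hax)).not_gt hx

/-- The envelope theorem for a family of objectives that is affine in the parameter. -/
theorem hasDerivAt_of_isMaxOn_sub_mul {X : Type*} {a c : X → ℝ} {s : Set X} {w : ℝ → X}
    {V : ℝ → ℝ} {ν : ℝ}
    (hmax : ∀ᶠ μ in 𝓝 ν, w μ ∈ s ∧ IsMaxOn (fun x => a x - μ * c x) s (w μ))
    (hV : ∀ᶠ μ in 𝓝 ν, V μ = a (w μ) - μ * c (w μ)) (hc : ContinuousAt (c ∘ w) ν) :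
    HasDerivAt V (-c (w ν)) ν := by
  obtain ⟨hνs, hνmax⟩ := hmax.self_of_nhds
  have hbound : ∀ᶠ μ in 𝓝 ν,
      ‖V μ - V ν - (μ - ν) • -c (w ν)‖ ≤ 1 * ‖(c (w μ) - c (w ν)) * (μ - ν)‖ := by
    filter_upwards [hmax, hV] with μ ⟨hμs, hμmax⟩ hVμ
    have lower : a (w ν) - μ * c (w ν) ≤ a (w μ) - μ * c (w μ) := hμmax hνs
    have upper : a (w μ) - ν * c (w μ) ≤ a (w ν) - ν * c (w ν) := hνmax hμs
    rw [hVμ, hV.self_of_nhds, smul_eq_mul, Real.norm_eq_abs, Real.norm_eq_abs, one_mul,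
      abs_of_nonneg (by linarith)]
    calc _ ≤ (c (w μ) - c (w ν)) * (ν - μ) := by linarith
      _ ≤ |(c (w μ) - c (w ν)) * (ν - μ)| := le_abs_self _
      _ = |(c (w μ) - c (w ν)) * (μ - ν)| := by rw [abs_mul, abs_mul, abs_sub_comm ν μ]
  have hsmall : (fun μ => c (w μ) - c (w ν)) =o[𝓝 ν] fun _ => (1 : ℝ) :=
    (Asymptotics.isLittleO_one_iff ℝ).2 (tendsto_sub_nhds_zero_iff.2 hc)
  refine .of_isLittleO ((Asymptotics.IsBigO.of_bound 1 hbound).trans_isLittleO ?_)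
  simpa only [one_mul] using hsmall.mul_isBigO (Asymptotics.isBigO_refl (fun μ => μ - ν) _)

theorem pos_and_mul_deriv_eq_one_of_isMaxOn {g : ℝ → ℝ} (hg : Differentiable ℝ g)
    (h0' : deriv g 0 = 0) {ν w : ℝ} (hw : 0 ≤ w)
    (hmax : IsMaxOn (fun x => x - ν * g x) (Ici 0) w) : 0 < w ∧ ν * deriv g w = 1 := by
  have hderiv (x : ℝ) : HasDerivAt (fun x => x - ν * g x) (1 - ν * deriv g x) x :=
    (hasDerivAt_id x).sub ((hg x).hasDerivAt.const_mul ν)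
  have hwpos : 0 < w := by
    refine hw.lt_of_ne ?_
    rintro rfl
    have hcone : (1 : ℝ) ∈ posTangentConeAt (Ici 0) 0 :=
      mem_posTangentConeAt_of_segment_subset (by simp [segment_eq_Icc, Icc_subset_Ici_self])
    have := hmax.localize.hasFDerivWithinAt_nonpos (hderiv 0).hasDerivWithinAt hcone
    norm_num [h0'] at this
  have := (hmax.isLocalMax (Ici_mem_nhds hwpos)).hasDerivAt_eq_zero (hderiv w)
  exact ⟨hwpos, by linarith⟩

theorem continuousAt_of_mul_deriv_eq_one {g w : ℝ → ℝ} (hmono : StrictMonoOn (deriv g) (Ici 0))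
    (hfoc : ∀ μ, 0 < μ → 0 < w μ ∧ μ * deriv g (w μ) = 1) {ν : ℝ} (hν : 0 < ν) :
    ContinuousAt w ν := by
  have hfoc' : ∀ μ, 0 < μ → deriv g (w μ) = μ⁻¹ := fun μ hμ =>
    eq_inv_of_mul_eq_one_right (hfoc μ hμ).2
  refine hmono.tendsto_of_tendsto_comp (Ici_mem_nhds (hfoc ν hν).1)
    ((eventually_gt_nhds hν).mono fun μ hμ => (hfoc μ hμ).1.le) ?_
  rw [Function.comp_def, hfoc' ν hν]
  exact (tendsto_inv₀ hν.ne').congr' ((eventually_gt_nhds hν).mono fun μ hμ => (hfoc' μ hμ).symm)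

theorem mul_div_le_max_of_monotoneOn {f d : ℝ → ℝ} {s : Set ℝ} (hd : MonotoneOn d s)
    (hq : MonotoneOn (fun x => f x / d x) s) {a b : ℝ} (ha : a ∈ s) (hb : b ∈ s)
    (hfb : 0 ≤ f b) (hda : 0 < d a) (hdb : 0 < d b) : d a * f b / d b ≤ max (f a) (f b) := by
  rcases le_total a b with hab | hba
  · refine le_max_of_le_right ?_
    rw [div_le_iff₀ hdb, mul_comm (f b)]
    exact mul_le_mul_of_nonneg_right (hd ha hb hab) hfb
  · refine le_max_of_le_left ?_
    calc d a * f b / d b = d a * (f b / d b) := mul_div_assoc _ _ _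
      _ ≤ d a * (f a / d a) := mul_le_mul_of_nonneg_left (hq hb ha hba) hda.le
      _ = f a := mul_div_cancel₀ _ hda.ne'

theorem StrictConvexOn.pos_of_deriv_eq_zero {g : ℝ → ℝ} (hsc : StrictConvexOn ℝ (Ici 0) g)
    (hd : DifferentiableAt ℝ g 0) (h0 : g 0 = 0) (h0' : deriv g 0 = 0) {x : ℝ} (hx : 0 < x) :
    0 < g x := by
  have := hsc.deriv_lt_slope self_mem_Ici hx.le hx hd
  rwa [h0', slope_def_field, h0, sub_zero, sub_zero, div_pos_iff_of_pos_right hx] at this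

theorem StrictConvexOn.deriv_mul_div_deriv_lt {g : ℝ → ℝ} (hsc : StrictConvexOn ℝ (Ici 0) g)
    (hd : Differentiable ℝ g) (h0 : g 0 = 0) (h0' : deriv g 0 = 0)
    (hlog : MonotoneOn (fun w => g w / deriv g w) (Ioi 0)) {C a b : ℝ} (hC : 1 ≤ C)
    (ha : 0 < a) (hb : 0 < b) : deriv g a * g b / deriv g b < g a + C * g b := by
  have hmono : StrictMonoOn (deriv g) (Ici 0) := hsc.strictMonoOn_deriv fun x _ => hd x
  have hga := hsc.pos_of_deriv_eq_zero (hd 0) h0 h0' ha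
  have hgb := hsc.pos_of_deriv_eq_zero (hd 0) h0 h0' hb
  have hratio := mul_div_le_max_of_monotoneOn (hmono.monotoneOn.mono Ioi_subset_Ici_self)
    hlog ha hb hgb.le (h0' ▸ hmono self_mem_Ici ha.le ha) (h0' ▸ hmono self_mem_Ici hb.le hb)
  exact hratio.trans_lt (max_lt (by nlinarith) (by nlinarith))

theorem stmt16_general (g : ℝ → ℝ) (hg : ContDiff ℝ 1 g)
    (hsc : StrictConvexOn ℝ (Set.Ici (0 : ℝ)) g)
    (h0 : g 0 = 0) (h0' : deriv g 0 = 0)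
    (hlog : StrictMonoOn (fun w => g w / deriv g w) (Set.Ioi 0))
    (α C : ℝ) (hα : 0 < α) (hC : 1 < C)
    (wstar : ℝ → ℝ)
    (hmax : ∀ ν : ℝ, 0 < ν → 0 ≤ wstar ν ∧
      IsMaxOn (fun x => x - ν * g x) (Set.Ici 0) (wstar ν))
    (V : ℝ → ℝ) (hV : ∀ ν : ℝ, 0 < ν → V ν = wstar ν - ν * g (wstar ν))
    (W : ℝ → ℝ)
    (hW : ∀ ν : ℝ, 0 < ν → W ν = C * α - ν * g (α + V ν) + C * V ν)
    (ν : ℝ) (hν : 0 < ν) :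
    deriv W ν < 0 ∧
      g (α + V ν) + C * g (wstar ν)
        > deriv g (α + V ν) * g (wstar ν) / deriv g (wstar ν) := by
  have hgd : Differentiable ℝ g := hg.differentiable one_ne_zero
  have hmono : StrictMonoOn (deriv g) (Ici 0) := hsc.strictMonoOn_deriv fun x _ => hgd x
  have hfoc μ (hμ : 0 < μ) :=
    pos_and_mul_deriv_eq_one_of_isMaxOn hgd h0' (hmax μ hμ).1 (hmax μ hμ).2
  obtain ⟨hb, hνb⟩ := hfoc ν hν
  have hVd : HasDerivAt V (-g (wstar ν)) ν := hasDerivAt_of_isMaxOn_sub_mul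
    ((eventually_gt_nhds hν).mono fun μ hμ => hmax μ hμ)
    ((eventually_gt_nhds hν).mono hV)
    (hg.continuous.continuousAt.comp (continuousAt_of_mul_deriv_eq_one hmono hfoc hν))
  set b := wstar ν
  set a := α + V ν
  have ha : 0 < a := by
    have h : 0 - ν * g 0 ≤ b - ν * g b := (hmax ν hν).2 self_mem_Ici
    rw [h0] at h
    linarith [hV ν hν]
  have hineq : deriv g a * g b / deriv g b < g a + C * g b :=
    hsc.deriv_mul_div_deriv_lt hgd h0 h0' hlog.monotoneOn hC.le ha hb
  refine ⟨?_, hineq⟩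
  have hWd : HasDerivAt W (0 - (1 * g a + ν * (deriv g a * -g b)) + C * -g b) ν :=
    (((hasDerivAt_const ν (C * α)).sub ((hasDerivAt_id ν).mul
      ((hgd a).hasDerivAt.comp ν (hVd.const_add α)))).add (hVd.const_mul C)).congr_of_eventuallyEq
      ((eventually_gt_nhds hν).mono hW)
  have hν_eq : ν * (deriv g a * g b) = deriv g a * g b / deriv g b := by
    rw [eq_div_iff (right_ne_zero_of_mul_eq_one hνb)]
    linear_combination (deriv g a * g b) * hνb
  rw [hWd.deriv]
  linarith

/-- In the intermediation regime, the equilibrium social welfare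
`W(ν) = Cα - ν·g(α + V(ν)) + C·V(ν)` (with `V(ν) = max_{w≥0}(w - ν g(w))`) is
strictly decreasing in `ν`: its derivative is strictly negative, equivalently
`g(α + V(ν)) + C·g(w*(ν)) > g'(α + V(ν))·g(w*(ν))/g'(w*(ν))`. -/
theorem stmt16 (g : ℝ → ℝ) (hg : ContDiff ℝ 1 g)
    (hsc : StrictConvexOn ℝ (Set.Ici (0 : ℝ)) g)
    (h0 : g 0 = 0) (h0' : deriv g 0 = 0)
    (hg'inf : Tendsto (deriv g) atTop atTop)
    (hlog : StrictMonoOn (fun w => g w / deriv g w) (Set.Ioi 0))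
    (α C : ℝ) (hα : 0 < α) (hC : 1 < C)
    (wstar : ℝ → ℝ)
    (hmax : ∀ ν : ℝ, 0 < ν → 0 ≤ wstar ν ∧
      IsMaxOn (fun x => x - ν * g x) (Set.Ici 0) (wstar ν))
    (huniq : ∀ ν : ℝ, 0 < ν → ∀ w : ℝ, 0 ≤ w →
      IsMaxOn (fun x => x - ν * g x) (Set.Ici 0) w → w = wstar ν)
    (V : ℝ → ℝ) (hV : ∀ ν : ℝ, 0 < ν → V ν = wstar ν - ν * g (wstar ν))
    (W : ℝ → ℝ)
    (hW : ∀ ν : ℝ, 0 < ν → W ν = C * α - ν * g (α + V ν) + C * V ν)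
    (ν : ℝ) (hν : 0 < ν) :
    deriv W ν < 0 ∧
      g (α + V ν) + C * g (wstar ν)
        > deriv g (α + V ν) * g (wstar ν) / deriv g (wstar ν) :=
  stmt16_general g hg hsc h0 h0' hlog α C hα hC wstar hmax V hV W hW ν hν
end
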